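/- Let S be the set of points [y₀:y₁:y₂] of the complex projective plane ℙ²(ℂ) satisfying y₀³ + y₁³ + y₂³ = 0 and y₀y₁y₂ = 0 (these conditions are well defined since both polynomials are homogeneous). Then S has exactly 9 elements. Moreover, the group of projective transformations generated by g₁ : [y₀:y₁:y₂] ↦ [y₀:ζy₁:ζ²y₂] and g₂ : [y₀:y₁:y₂] ↦ [y₁:y₂:y₀] maps S to itself and acts transitively on S. -/

import Mathlib

open scoped LinearAlgebra.Projectivization
open Projectivization

/-- The primitive cube root of unity `ζ = e^{2πi/3}`. -/
noncomputable def zetaC : ℂ := Complex.exp (2 * Real.pi * Complex.I / 3)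

lemma zetaC_ne_zero : zetaC ≠ 0 := Complex.exp_ne_zero _

/-- The linear automorphism of `ℂ³` inducing `g₁ : [y₀:y₁:y₂] ↦ [y₀:ζy₁:ζ²y₂]`. -/
noncomputable def g1Lin : (Fin 3 → ℂ) ≃ₗ[ℂ] (Fin 3 → ℂ) :=
  LinearEquiv.piCongrRight fun i =>
    LinearEquiv.smulOfNeZero ℂ ℂ (![1, zetaC, zetaC ^ 2] i)
      (by fin_cases i
          · exact one_ne_zero
          · exact zetaC_ne_zero
          · exact pow_ne_zero 2 zetaC_ne_zero)

/-- The linear automorphism of `ℂ³` inducing `g₂ : [y₀:y₁:y₂] ↦ [y₁:y₂:y₀]`. -/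
noncomputable def g2Lin : (Fin 3 → ℂ) ≃ₗ[ℂ] (Fin 3 → ℂ) :=
  LinearEquiv.funCongrLeft ℂ ℂ (finRotate 3)

/-- The projective transformation of `ℙ²(ℂ)` induced by a linear automorphism of `ℂ³`. -/
noncomputable def projPerm (e : (Fin 3 → ℂ) ≃ₗ[ℂ] (Fin 3 → ℂ)) :
    Equiv.Perm (ℙ ℂ (Fin 3 → ℂ)) where
  toFun := Projectivization.map e.toLinearMap e.injective
  invFun := Projectivization.map e.symm.toLinearMap e.symm.injective
  left_inv p := by
    induction p using Projectivization.ind with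
    | h v hv =>
      rw [Projectivization.map_mk, Projectivization.map_mk]
      exact (Projectivization.mk_eq_mk_iff' ℂ _ _ _ hv).mpr ⟨1, by simp⟩
  right_inv p := by
    induction p using Projectivization.ind with
    | h v hv =>
      rw [Projectivization.map_mk, Projectivization.map_mk]
      exact (Projectivization.mk_eq_mk_iff' ℂ _ _ _ hv).mpr ⟨1, by simp⟩

/-- The set `S` of points `[y₀:y₁:y₂] ∈ ℙ²(ℂ)` satisfying `y₀³+y₁³+y₂³ = 0` and
`y₀y₁y₂ = 0` (both conditions are homogeneous, hence well defined). -/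
def Scubics : Set (ℙ ℂ (Fin 3 → ℂ)) :=
  {p | ∃ (y : Fin 3 → ℂ) (hy : y ≠ 0), Projectivization.mk ℂ y hy = p ∧
    y 0 ^ 3 + y 1 ^ 3 + y 2 ^ 3 = 0 ∧ y 0 * y 1 * y 2 = 0}

/-!
Every point of `S` has a vanishing coordinate `y_j`, and the other two satisfy `a³ + b³ = 0`, so
`b = -ζ^k a`. Hence `S` consists of the nine points with `0`, `1`, `-ζ^k` in the coordinates
`j`, `j + 1`, `j + 2`, indexed by `(j, k) ∈ ℤ₃ × ℤ₃`. In these coordinates `g₁` is the translation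
`k ↦ k + 1` and `g₂` the translation `j ↦ j - 1`, and translations act simply transitively.
-/

lemma isPrimitiveRoot_zetaC : IsPrimitiveRoot zetaC 3 := by
  rw [zetaC]; exact_mod_cast Complex.isPrimitiveRoot_exp 3 (by norm_num)

noncomputable def zetaPow (i : Fin 3) : ℂ := zetaC ^ (i : ℕ)

lemma zetaPow_add (a b : Fin 3) : zetaPow (a + b) = zetaPow a * zetaPow b := by
  rw [zetaPow, zetaPow, zetaPow, ← pow_add, Fin.val_add,
    ← pow_eq_pow_mod _ isPrimitiveRoot_zetaC.pow_eq_one]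

lemma zetaPow_injective : Function.Injective zetaPow := fun a b h =>
  Fin.ext (isPrimitiveRoot_zetaC.pow_inj a.isLt b.isLt h)

lemma zetaPow_ne_zero (k : Fin 3) : zetaPow k ≠ 0 := pow_ne_zero _ zetaC_ne_zero

lemma zetaPow_pow_three (k : Fin 3) : zetaPow k ^ 3 = 1 := by
  rw [zetaPow, ← pow_mul, mul_comm, pow_mul, isPrimitiveRoot_zetaC.pow_eq_one, one_pow]

lemma exists_eq_neg_zetaPow_mul {a b : ℂ} (ha : a ≠ 0) (h : a ^ 3 + b ^ 3 = 0) :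
    ∃ k : Fin 3, b = -zetaPow k * a := by
  obtain ⟨i, hi, hζ⟩ := isPrimitiveRoot_zetaC.eq_pow_of_pow_eq_one (ξ := -b / a)
    (by rw [div_pow, div_eq_one_iff_eq (pow_ne_zero 3 ha)]; linear_combination -h)
  exact ⟨⟨i, hi⟩, by rw [zetaPow, Fin.val_mk, hζ]; field_simp⟩

@[to_additive]
lemma Fin.prod_three_rotate {M : Type*} [CommMonoid M] (f : Fin 3 → M) (m : Fin 3) :
    f 0 * f 1 * f 2 = f m * f (m + 1) * f (m + 2) := by
  simpa [Fin.prod_univ_three] using (Equiv.prod_comp (Equiv.addLeft m) f).symm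

lemma Fin.forall_three_of_rotate {P : Fin 3 → Prop} (m : Fin 3)
    (h₀ : P m) (h₁ : P (m + 1)) (h₂ : P (m + 2)) (i : Fin 3) : P i := by
  obtain ⟨t, rfl⟩ : ∃ t, i = m + t := ⟨i - m, by abel⟩
  fin_cases t <;> simpa

lemma Equiv.Perm.pow_apply_of_apply_eq_add {α ι : Type*} [AddMonoid ι] {f : Equiv.Perm α}
    {P : ι → α} {d : ι} (h : ∀ i, f (P i) = P (i + d)) (n : ℕ) (i : ι) :
    (f ^ n) (P i) = P (i + n • d) := by
  induction n with
  | zero => simp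
  | succ n ih => rw [pow_succ', Equiv.Perm.mul_apply, ih, h, succ_nsmul, add_assoc]

lemma Set.image_range_of_apply_eq_add {α ι : Type*} [AddGroup ι] {f : α → α} {P : ι → α}
    {d : ι} (h : ∀ i, f (P i) = P (i + d)) : f '' Set.range P = Set.range P := by
  rw [← Set.range_comp, show f ∘ P = P ∘ (· + d) from funext h,
    (add_right_surjective d).range_comp]

lemma g1Lin_apply (y : Fin 3 → ℂ) : g1Lin y = ![y 0, zetaC * y 1, zetaC ^ 2 * y 2] := by
  funext i
  fin_cases i <;> simp [g1Lin, LinearEquiv.smulOfNeZero, LinearEquiv.smulOfUnit]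

lemma g2Lin_apply (y : Fin 3 → ℂ) : g2Lin y = ![y 1, y 2, y 0] := by
  funext i
  fin_cases i <;> simp [g2Lin, LinearEquiv.funCongrLeft]

lemma g1Lin_apply_eq_zetaPow_mul (y : Fin 3 → ℂ) (i : Fin 3) :
    g1Lin y i = zetaPow i * y i := by
  rw [g1Lin_apply]; fin_cases i <;> simp [zetaPow]

lemma g2Lin_apply_eq_apply_add_one (y : Fin 3 → ℂ) (i : Fin 3) : g2Lin y i = y (i + 1) := by
  rw [g2Lin_apply]; fin_cases i <;> rfl

lemma projPerm_mk (e : (Fin 3 → ℂ) ≃ₗ[ℂ] (Fin 3 → ℂ)) (v : Fin 3 → ℂ) (hv : v ≠ 0) :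
    projPerm e (mk ℂ v hv) = mk ℂ (e v) (e.map_ne_zero_iff.mpr hv) :=
  map_mk e.toLinearMap e.injective v hv

noncomputable def ninePtVec (j k : Fin 3) (i : Fin 3) : ℂ := ![0, 1, -zetaPow k] (i - j)

@[simp] lemma ninePtVec_self (j k : Fin 3) : ninePtVec j k j = 0 := by
  simp [ninePtVec]

@[simp] lemma ninePtVec_add_one (j k : Fin 3) : ninePtVec j k (j + 1) = 1 := by
  simp [ninePtVec]

@[simp] lemma ninePtVec_add_two (j k : Fin 3) : ninePtVec j k (j + 2) = -zetaPow k := by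
  simp [ninePtVec]

lemma ninePtVec_ne_zero (j k : Fin 3) : ninePtVec j k ≠ 0 := fun h => by
  simpa using congrFun h (j + 1)

lemma ninePtVec_eq_zero_iff {j k i : Fin 3} : ninePtVec j k i = 0 ↔ i = j := by
  refine Fin.forall_three_of_rotate (P := fun i => ninePtVec j k i = 0 ↔ i = j) j ?_ ?_ ?_ i <;>
    simp [zetaPow_ne_zero]

noncomputable def ninePt (j k : Fin 3) : ℙ ℂ (Fin 3 → ℂ) :=
  mk ℂ (ninePtVec j k) (ninePtVec_ne_zero j k)

lemma ninePt_mem_Scubics (j k : Fin 3) : ninePt j k ∈ Scubics := by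
  refine ⟨ninePtVec j k, ninePtVec_ne_zero j k, rfl, ?_, ?_⟩
  · rw [Fin.sum_three_rotate (fun i => ninePtVec j k i ^ 3) j]
    simp only [ninePtVec_self, ninePtVec_add_one, ninePtVec_add_two]
    linear_combination (-1 : ℂ) * zetaPow_pow_three k
  · simp [Fin.prod_three_rotate _ j]

lemma exists_ninePt_eq_mk {y : Fin 3 → ℂ} (hy : y ≠ 0)
    (hsum : y 0 ^ 3 + y 1 ^ 3 + y 2 ^ 3 = 0) (hprod : y 0 * y 1 * y 2 = 0) :
    ∃ j k, ninePt j k = mk ℂ y hy := by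
  obtain ⟨j, hj⟩ : ∃ j, y j = 0 := by
    rcases mul_eq_zero.mp hprod with h | h
    · rcases mul_eq_zero.mp h with h | h
      exacts [⟨0, h⟩, ⟨1, h⟩]
    · exact ⟨2, h⟩
  rw [Fin.sum_three_rotate (fun i => y i ^ 3) j, hj] at hsum
  have hy₁ : y (j + 1) ≠ 0 := by
    intro h₁
    have h₂ : y (j + 2) = 0 := by simpa [h₁] using hsum
    exact hy (funext (Fin.forall_three_of_rotate j hj h₁ h₂))
  obtain ⟨k, hk⟩ := exists_eq_neg_zetaPow_mul (b := y (j + 2)) hy₁ (by linear_combination hsum)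
  refine ⟨j, k, ((mk_eq_mk_iff' ℂ _ _ _ _).mpr ⟨y (j + 1), funext ?_⟩).symm⟩
  refine Fin.forall_three_of_rotate (P := fun i => (y (j + 1) • ninePtVec j k) i = y i) j
    ?_ ?_ ?_ <;> simp [hj, hk, mul_comm]

lemma Scubics_eq_range : Scubics = Set.range (Function.uncurry ninePt) := by
  ext p
  constructor
  · rintro ⟨y, hy, rfl, hsum, hprod⟩
    obtain ⟨j, k, h⟩ := exists_ninePt_eq_mk hy hsum hprod
    exact ⟨(j, k), h⟩
  · rintro ⟨⟨j, k⟩, rfl⟩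
    exact ninePt_mem_Scubics j k

lemma ninePt_injective : Function.Injective (Function.uncurry ninePt) := by
  rintro ⟨j, k⟩ ⟨j', k'⟩ h
  obtain ⟨a, ha⟩ := (mk_eq_mk_iff' ℂ _ _ _ _).mp h
  have ha₀ : a ≠ 0 := by
    rintro rfl
    exact ninePtVec_ne_zero j k (by simpa using ha.symm)
  obtain rfl : j = j' := ninePtVec_eq_zero_iff.mp (by simpa [ha₀] using congrFun ha j)
  obtain rfl : a = 1 := by simpa using congrFun ha (j + 1)
  have hk : zetaPow k' = zetaPow k := by simpa using congrFun ha (j + 2)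
  rw [zetaPow_injective hk]

lemma projPerm_g1Lin_ninePt (j k : Fin 3) : projPerm g1Lin (ninePt j k) = ninePt j (k + 1) := by
  refine (projPerm_mk _ _ _).trans ((mk_eq_mk_iff' ℂ _ _ _ _).mpr ⟨zetaPow (j + 1), funext ?_⟩)
  refine Fin.forall_three_of_rotate
    (P := fun i => (zetaPow (j + 1) • ninePtVec j (k + 1)) i = g1Lin (ninePtVec j k) i) j
    ?_ ?_ ?_ <;>
    simp only [g1Lin_apply_eq_zetaPow_mul, Pi.smul_apply, smul_eq_mul, ninePtVec_self,
      ninePtVec_add_one, ninePtVec_add_two]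
  · rw [mul_zero, mul_zero]
  · rw [show j + 2 = j + 1 + 1 by rw [add_assoc]; rfl, zetaPow_add (j + 1), zetaPow_add k]
    ring

lemma projPerm_g2Lin_ninePt (j k : Fin 3) : projPerm g2Lin (ninePt j k) = ninePt (j - 1) k := by
  refine (projPerm_mk _ _ _).trans ?_
  unfold ninePt
  congr 1
  funext i
  rw [g2Lin_apply_eq_apply_add_one, ninePtVec, ninePtVec, sub_sub_eq_add_sub, add_sub_right_comm]

lemma projPerm_g1Lin_uncurry_ninePt (x : Fin 3 × Fin 3) :
    projPerm g1Lin (Function.uncurry ninePt x) = Function.uncurry ninePt (x + (0, 1)) := by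
  obtain ⟨j, k⟩ := x
  simpa using projPerm_g1Lin_ninePt j k

lemma projPerm_g2Lin_uncurry_ninePt (x : Fin 3 × Fin 3) :
    projPerm g2Lin (Function.uncurry ninePt x) = Function.uncurry ninePt (x + (-1, 0)) := by
  obtain ⟨j, k⟩ := x
  simpa [sub_eq_add_neg] using projPerm_g2Lin_ninePt j k

open Pointwise in
lemma image_Scubics_of_mem_closure {g : Equiv.Perm (ℙ ℂ (Fin 3 → ℂ))}
    (hg : g ∈ Subgroup.closure {projPerm g1Lin, projPerm g2Lin}) : g '' Scubics = Scubics := by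
  suffices Subgroup.closure {projPerm g1Lin, projPerm g2Lin} ≤
      MulAction.stabilizer (Equiv.Perm (ℙ ℂ (Fin 3 → ℂ))) Scubics from
    MulAction.mem_stabilizer_iff.mp (this hg)
  rw [Subgroup.closure_le, Set.insert_subset_iff, Set.singleton_subset_iff, Scubics_eq_range]
  exact ⟨MulAction.mem_stabilizer_iff.mpr
      (Set.image_range_of_apply_eq_add projPerm_g1Lin_uncurry_ninePt),
    MulAction.mem_stabilizer_iff.mpr
      (Set.image_range_of_apply_eq_add projPerm_g2Lin_uncurry_ninePt)⟩

open Fin.NatCast in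
lemma exists_mem_closure_apply_ninePt_eq (x y : Fin 3 × Fin 3) :
    ∃ g ∈ Subgroup.closure {projPerm g1Lin, projPerm g2Lin},
      g (Function.uncurry ninePt x) = Function.uncurry ninePt y := by
  refine ⟨projPerm g1Lin ^ (y.2 - x.2).val * projPerm g2Lin ^ (x.1 - y.1).val,
    mul_mem (pow_mem (Subgroup.subset_closure (by simp)) _)
      (pow_mem (Subgroup.subset_closure (by simp)) _), ?_⟩
  rw [Equiv.Perm.mul_apply, Equiv.Perm.pow_apply_of_apply_eq_add projPerm_g2Lin_uncurry_ninePt,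
    Equiv.Perm.pow_apply_of_apply_eq_add projPerm_g1Lin_uncurry_ninePt]
  congr 1
  refine Prod.ext ?_ ?_ <;> simp

/-- **The nine common solutions of the two cubics, and transitivity of `ℤ₃×ℤ₃`.**
`g₁Lin` and `g₂Lin` indeed act by `y ↦ (y₀, ζy₁, ζ²y₂)` and `y ↦ (y₁, y₂, y₀)`;
the set `S` has exactly 9 elements; and the group of projective transformations
generated by `g₁` and `g₂` maps `S` to itself and acts transitively on `S`. -/
theorem nine_points_transitive :
    (∀ y : Fin 3 → ℂ, g1Lin y = ![y 0, zetaC * y 1, zetaC ^ 2 * y 2]) ∧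
    (∀ y : Fin 3 → ℂ, g2Lin y = ![y 1, y 2, y 0]) ∧
    Scubics.ncard = 9 ∧
    (∀ g ∈ Subgroup.closure {projPerm g1Lin, projPerm g2Lin}, g '' Scubics = Scubics) ∧
    (∀ p ∈ Scubics, ∀ q ∈ Scubics,
      ∃ g ∈ Subgroup.closure {projPerm g1Lin, projPerm g2Lin}, g p = q) := by
  refine ⟨g1Lin_apply, g2Lin_apply, ?_, fun g hg => image_Scubics_of_mem_closure hg, ?_⟩
  · rw [Scubics_eq_range, Set.ncard_range_of_injective ninePt_injective]
    simp
  · simp only [Scubics_eq_range, Set.forall_mem_range]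
    exact exists_mem_closure_apply_ninePt_eq
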